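/- arXiv:1608.05749 — 2 statements merged into one kernel-verified Lean document; each statement's English description precedes it below -/
import Mathlib

section
/- Let X ~ N(0, I_p) be a standard Gaussian vector in ℝ^p and let β ∈ ℝ^p be any fixed vector. Then E[⟨X, β⟩³ X ⊗ X ⊗ X] = 6 β ⊗ β ⊗ β + 3 𝒯(‖β‖₂² β), where 𝒯(m) := Σ_{i∈[p]} (m ⊗ e_i ⊗ e_i + e_i ⊗ m ⊗ e_i + e_i ⊗ e_i ⊗ m). -/
open MeasureTheory ProbabilityTheory Finset

/-- The standard Gaussian measure `N(0, I_p)` on `ℝ^p`. -/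
noncomputable def stdGaussianPi (p : ℕ) : Measure (Fin p → ℝ) :=
  Measure.pi fun _ => gaussianReal 0 1

/-- The symmetric third-order tensor
`𝒯(m) = ∑_{i ∈ [p]} (m ⊗ e_i ⊗ e_i + e_i ⊗ m ⊗ e_i + e_i ⊗ e_i ⊗ m)`, entrywise. -/
noncomputable def Tmap {p : ℕ} (m : Fin p → ℝ) : Fin p → Fin p → Fin p → ℝ :=
  fun a b c => ∑ i : Fin p,
    (m a * (if b = i then (1 : ℝ) else 0) * (if c = i then 1 else 0)
      + (if a = i then 1 else 0) * m b * (if c = i then 1 else 0)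
      + (if a = i then 1 else 0) * (if b = i then 1 else 0) * m c)

/-!
Isserlis' (Wick's) recursion for `X ~ N(0, I_p)`:
`E[⟨X,u⟩ ∏ₘ ⟨X,vₘ⟩] = ∑ₖ ⟨u,vₖ⟩ E[∏_{m ≠ k} ⟨X,vₘ⟩]`.
Expanding the linear forms in coordinates, it suffices to prove it for monomials, where
independence gives `E[∏ₘ X_{σ m}] = ∏ₜ E[ξ ^ #σ⁻¹(t)]` for a standard normal `ξ`; the
recursion then reduces to the one-dimensional integration by parts
`E[ξ ^ (k+1)] = k E[ξ ^ (k-1)]`.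
Applied three times to `⟨X,β⟩³ ⟨X,e_a⟩ ⟨X,e_b⟩ ⟨X,e_c⟩`, it leaves the 15 pairings of these
six factors: the six pairing each `β` with some `e` give `6 β_a β_b β_c`, and the nine pairing
two `β`s together give `3 ‖β‖² (β_a δ_bc + β_b δ_ac + β_c δ_ab)`.
-/

open Real
open scoped NNReal

lemma hasDerivAt_gaussianPDFReal_zero_one (x : ℝ) :
    HasDerivAt (gaussianPDFReal 0 1) (-x * gaussianPDFReal 0 1 x) x := by
  have hpdf : gaussianPDFReal 0 1 = fun y => (√(2 * π))⁻¹ * rexp (-y ^ 2 / 2) := by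
    funext y; simp [gaussianPDFReal]
  rw [hpdf]
  refine ((((hasDerivAt_pow 2 x).neg.div_const 2).exp).const_mul _).congr_deriv ?_
  simp only [Pi.neg_apply]; push_cast; ring

lemma integrable_pow_gaussianReal (μ : ℝ) (v : ℝ≥0) (n : ℕ) :
    Integrable (fun x => x ^ n) (gaussianReal μ v) := by
  refine (integrable_norm_iff (by fun_prop)).1 ?_
  simpa [norm_pow] using (memLp_id_gaussianReal (μ := μ) (v := v) n).integrable_norm_pow'

lemma integrable_pow_mul_gaussianPDFReal (μ : ℝ) (v : ℝ≥0) (n : ℕ) :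
    Integrable (fun x => x ^ n * gaussianPDFReal μ v x) := by
  by_cases hv : v = 0
  · simp [hv]
  have h := integrable_pow_gaussianReal μ v n
  rw [gaussianReal_of_var_ne_zero μ hv, integrable_withDensity_iff_integrable_smul'
    (measurable_gaussianPDF μ v) (ae_of_all _ fun _ => gaussianPDF_lt_top)] at h
  simpa [mul_comm] using h

theorem integral_pow_add_two_gaussianReal (n : ℕ) :
    ∫ x, x ^ (n + 2) ∂gaussianReal 0 1 = (n + 1) * ∫ x, x ^ n ∂gaussianReal 0 1 := by
  simp only [integral_gaussianReal_eq_integral_smul one_ne_zero, smul_eq_mul]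
  have hderiv (x : ℝ) : HasDerivAt (fun y : ℝ => y ^ (n + 1)) ((n + 1) * x ^ n) x := by
    simpa using hasDerivAt_pow (n + 1) x
  have hint := integrable_pow_mul_gaussianPDFReal 0 1
  have hparts := integral_mul_deriv_eq_deriv_mul_of_integrable (fun x _ => hderiv x)
    (fun x _ => hasDerivAt_gaussianPDFReal_zero_one x)
    ((hint (n + 2)).neg.congr
      (ae_of_all _ fun x => by simp only [Pi.mul_apply, Pi.neg_apply]; ring))
    (((hint n).const_mul (n + 1)).congr (ae_of_all _ fun x => by simp only [Pi.mul_apply]; ring))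
    (hint (n + 1))
  calc ∫ x, gaussianPDFReal 0 1 x * x ^ (n + 2)
      = -∫ x, x ^ (n + 1) * (-x * gaussianPDFReal 0 1 x) := by
        rw [← integral_neg]; congr 1; funext x; ring
    _ = (n + 1) * ∫ x, gaussianPDFReal 0 1 x * x ^ n := by
        rw [hparts, neg_neg, ← integral_const_mul]; congr 1; funext x; ring

lemma integral_pow_succ_gaussianReal (k : ℕ) :
    ∫ x, x ^ (k + 1) ∂gaussianReal 0 1 = k * ∫ x, x ^ (k - 1) ∂gaussianReal 0 1 := by
  cases k with
  | zero => simp [integral_id_gaussianReal]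
  | succ k => simpa using integral_pow_add_two_gaussianReal k

lemma Fin.card_fiber_eq_card_fiber_succAbove_add {α : Type*} [DecidableEq α] {n : ℕ}
    (σ : Fin (n + 1) → α) (k : Fin (n + 1)) (t : α) :
    #{m | σ m = t} = #{j | σ (k.succAbove j) = t} + if σ k = t then 1 else 0 := by
  simp only [card_filter, Fin.sum_univ_succAbove _ k, add_comm]

lemma Fintype.prod_comp_eq_prod_pow_card_fiber {ι κ M : Type*} [Fintype ι] [Fintype κ]
    [DecidableEq κ] [CommMonoid M] (f : κ → M) (σ : ι → κ) :
    ∏ m, f (σ m) = ∏ t, f t ^ #{m | σ m = t} := by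
  rw [← Finset.prod_fiberwise univ σ]
  refine Finset.prod_congr rfl fun t _ => ?_
  rw [Finset.prod_congr rfl fun m hm => by rw [(mem_filter.1 hm).2], Finset.prod_const]

lemma Fin.sum_pi_eq_sum_sum_insertNth {α M : Type*} [Fintype α] [AddCommMonoid M] {n : ℕ}
    (k : Fin (n + 1)) (f : (Fin (n + 1) → α) → M) :
    ∑ σ, f σ = ∑ t, ∑ τ : Fin n → α, f (k.insertNth t τ) := by
  rw [← (Fin.insertNthEquiv (fun _ => α) k).sum_comp, Fintype.sum_prod_type]
  rfl

instance {p : ℕ} : IsProbabilityMeasure (stdGaussianPi p) := by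
  unfold stdGaussianPi; infer_instance

lemma integrable_prod_comp_stdGaussianPi {n p : ℕ} (σ : Fin n → Fin p) :
    Integrable (fun x => ∏ m, x (σ m)) (stdGaussianPi p) := by
  simp_rw [Fintype.prod_comp_eq_prod_pow_card_fiber _ σ]
  exact Integrable.fintype_prod fun t => integrable_pow_gaussianReal 0 1 _

lemma integral_prod_comp_stdGaussianPi {n p : ℕ} (σ : Fin n → Fin p) :
    ∫ x, ∏ m, x (σ m) ∂stdGaussianPi p = ∏ t, ∫ y, y ^ #{m | σ m = t} ∂gaussianReal 0 1 := by
  simp_rw [Fintype.prod_comp_eq_prod_pow_card_fiber _ σ]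
  exact integral_fintype_prod_eq_prod (fun t y => y ^ #{m | σ m = t})

/-- Both sides factor over the coordinates; only the factor at `s` differs, being
`E[ξ ^ (c + 1)]` on the left and `c` copies of `E[ξ ^ (c - 1)]` on the right, where
`c = #σ⁻¹(s)`. -/
theorem integral_mul_prod_comp_stdGaussianPi {n p : ℕ} (s : Fin p) (σ : Fin (n + 1) → Fin p) :
    ∫ x, x s * ∏ m, x (σ m) ∂stdGaussianPi p
      = ∑ k with σ k = s, ∫ x, ∏ j, x (σ (k.succAbove j)) ∂stdGaussianPi p := by
  set M : ℕ → ℝ := fun k => ∫ y, y ^ k ∂gaussianReal 0 1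
  have hsplit (c : Fin p → ℕ) : ∏ t, M (c t) = M (c s) * ∏ t ∈ univ.erase s, M (c t) :=
    (mul_prod_erase _ _ (mem_univ s)).symm
  have hcons (t : Fin p) : #{m | (Fin.cons s σ : Fin (n + 2) → Fin p) m = t}
      = #{m | σ m = t} + if s = t then 1 else 0 := by
    simpa using
      Fin.card_fiber_eq_card_fiber_succAbove_add (Fin.cons s σ : Fin (n + 2) → Fin p) 0 t
  have hremove (k : Fin (n + 1)) (hk : σ k = s) (t : Fin p) :
      #{j | σ (k.succAbove j) = t} = #{m | σ m = t} - if s = t then 1 else 0 := by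
    have := Fin.card_fiber_eq_card_fiber_succAbove_add σ k t
    rw [hk] at this; omega
  have hrest (f : Fin p → ℕ) (hf : ∀ t, t ≠ s → f t = #{m | σ m = t}) :
      ∏ t ∈ univ.erase s, M (f t) = ∏ t ∈ univ.erase s, M #{m | σ m = t} :=
    prod_congr rfl fun t ht => by rw [hf t (ne_of_mem_erase ht)]
  have hlhs : ∫ x, x s * ∏ m, x (σ m) ∂stdGaussianPi p
      = M (#{m | σ m = s} + 1) * ∏ t ∈ univ.erase s, M #{m | σ m = t} := by
    have h := integral_prod_comp_stdGaussianPi (Fin.cons s σ : Fin (n + 2) → Fin p)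
    simp only [Fin.prod_univ_succ (n := n + 1), Fin.cons_zero, Fin.cons_succ] at h
    rw [h, hsplit, hcons, if_pos rfl,
      hrest _ fun t ht => by rw [hcons, if_neg (Ne.symm ht)]; rfl]
  have hrhs (k : Fin (n + 1)) (hk : σ k = s) :
      ∫ x, ∏ j, x (σ (k.succAbove j)) ∂stdGaussianPi p
        = M (#{m | σ m = s} - 1) * ∏ t ∈ univ.erase s, M #{m | σ m = t} := by
    rw [integral_prod_comp_stdGaussianPi, hsplit, hremove k hk, if_pos rfl,
      hrest _ fun t ht => by rw [hremove k hk, if_neg (Ne.symm ht)]; rfl]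
  rw [hlhs, sum_congr rfl fun k hk => hrhs k (mem_filter.1 hk).2, sum_const, nsmul_eq_mul,
    ← mul_assoc]
  exact congrArg (· * _) (integral_pow_succ_gaussianReal _)

lemma integral_prod_dotProduct_stdGaussianPi {n p : ℕ} (v : Fin n → Fin p → ℝ) :
    ∫ x, ∏ m, x ⬝ᵥ v m ∂stdGaussianPi p
      = ∑ σ : Fin n → Fin p, (∏ m, v m (σ m)) * ∫ x, ∏ m, x (σ m) ∂stdGaussianPi p := by
  simp_rw [dotProduct, prod_univ_sum, Fintype.piFinset_univ, prod_mul_distrib]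
  rw [integral_finsetSum _ fun σ _ => (integrable_prod_comp_stdGaussianPi σ).mul_const _]
  simp_rw [integral_mul_const, mul_comm]

theorem integral_mul_prod_dotProduct_stdGaussianPi {n p : ℕ} (u : Fin p → ℝ)
    (v : Fin (n + 1) → Fin p → ℝ) :
    ∫ x, (x ⬝ᵥ u) * ∏ m, x ⬝ᵥ v m ∂stdGaussianPi p
      = ∑ k, (u ⬝ᵥ v k) * ∫ x, ∏ j, x ⬝ᵥ v (k.succAbove j) ∂stdGaussianPi p := by
  have hcons :=
    integral_prod_dotProduct_stdGaussianPi (Fin.cons u v : Fin (n + 2) → Fin p → ℝ)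
  simp only [Fin.prod_univ_succ (n := n + 1), Fin.cons_zero, Fin.cons_succ] at hcons
  rw [hcons, Fin.sum_pi_eq_sum_sum_insertNth 0]
  simp only [Fin.insertNth_zero', Fin.cons_zero, Fin.cons_succ,
    integral_mul_prod_comp_stdGaussianPi]
  calc _ = ∑ σ : Fin (n + 1) → Fin p, ∑ k, u (σ k) * ((∏ m, v m (σ m))
        * ∫ x, ∏ j, x (σ (k.succAbove j)) ∂stdGaussianPi p) := by
        rw [sum_comm]
        refine sum_congr rfl fun σ _ => ?_
        simp_rw [mul_sum, sum_filter]
        rw [sum_comm]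
        simp only [sum_ite_eq, mem_univ, if_true]
        exact sum_congr rfl fun k _ => mul_assoc _ _ _
    _ = _ := by
        rw [sum_comm]
        refine sum_congr rfl fun k _ => ?_
        rw [integral_prod_dotProduct_stdGaussianPi, Fin.sum_pi_eq_sum_sum_insertNth k, mul_sum,
          sum_comm]
        refine sum_congr rfl fun τ _ => ?_
        simp only [Fin.prod_univ_succAbove _ k, Fin.insertNth_apply_same,
          Fin.insertNth_apply_succAbove, dotProduct, sum_mul]
        exact sum_congr rfl fun t _ => by ring

theorem integral_two_dotProduct_stdGaussianPi {p : ℕ} (u v : Fin p → ℝ) :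
    ∫ x, (x ⬝ᵥ u) * (x ⬝ᵥ v) ∂stdGaussianPi p = u ⬝ᵥ v := by
  simpa using integral_mul_prod_dotProduct_stdGaussianPi u ![v]

theorem integral_four_dotProduct_stdGaussianPi {p : ℕ} (u v w z : Fin p → ℝ) :
    ∫ x, (x ⬝ᵥ u) * ((x ⬝ᵥ v) * ((x ⬝ᵥ w) * (x ⬝ᵥ z))) ∂stdGaussianPi p
      = (u ⬝ᵥ v) * (w ⬝ᵥ z) + ((u ⬝ᵥ w) * (v ⬝ᵥ z) + (u ⬝ᵥ z) * (v ⬝ᵥ w)) := by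
  simpa [Fin.sum_univ_succ, Fin.prod_univ_succ, Fin.succAbove,
    integral_two_dotProduct_stdGaussianPi]
    using integral_mul_prod_dotProduct_stdGaussianPi u ![v, w, z]

theorem integral_six_dotProduct_stdGaussianPi {p : ℕ} (u v w y z t : Fin p → ℝ) :
    ∫ x, (x ⬝ᵥ u) * ((x ⬝ᵥ v) * ((x ⬝ᵥ w) * ((x ⬝ᵥ y) * ((x ⬝ᵥ z) * (x ⬝ᵥ t)))))
        ∂stdGaussianPi p
      = (u ⬝ᵥ v) * ∫ x, (x ⬝ᵥ w) * ((x ⬝ᵥ y) * ((x ⬝ᵥ z) * (x ⬝ᵥ t))) ∂stdGaussianPi p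
        + ((u ⬝ᵥ w) * ∫ x, (x ⬝ᵥ v) * ((x ⬝ᵥ y) * ((x ⬝ᵥ z) * (x ⬝ᵥ t)))
            ∂stdGaussianPi p
        + ((u ⬝ᵥ y) * ∫ x, (x ⬝ᵥ v) * ((x ⬝ᵥ w) * ((x ⬝ᵥ z) * (x ⬝ᵥ t)))
            ∂stdGaussianPi p
        + ((u ⬝ᵥ z) * ∫ x, (x ⬝ᵥ v) * ((x ⬝ᵥ w) * ((x ⬝ᵥ y) * (x ⬝ᵥ t)))
            ∂stdGaussianPi p
        + (u ⬝ᵥ t) * ∫ x, (x ⬝ᵥ v) * ((x ⬝ᵥ w) * ((x ⬝ᵥ y) * (x ⬝ᵥ z)))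
            ∂stdGaussianPi p))) := by
  simpa [Fin.sum_univ_succ, Fin.prod_univ_succ, Fin.succAbove]
    using integral_mul_prod_dotProduct_stdGaussianPi u ![v, w, y, z, t]

lemma Tmap_apply {p : ℕ} (m : Fin p → ℝ) (a b c : Fin p) :
    Tmap m a b c = (if b = c then m a else 0) + (if a = c then m b else 0)
      + (if a = b then m c else 0) := by
  simp [Tmap, sum_add_distrib, mul_ite, ite_mul, sum_ite_eq]

/-- If `X ~ N(0, I_p)` and `β ∈ ℝ^p` is fixed, then
`E[⟨X,β⟩³ X ⊗ X ⊗ X] = 6 β^{⊗3} + 3 𝒯(‖β‖₂² β)`, stated entrywise. -/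
theorem gaussian_third_tensor_moment (p : ℕ) (β : Fin p → ℝ) :
    ∀ a b c : Fin p,
      ∫ x, (∑ i, x i * β i) ^ 3 * (x a * x b * x c) ∂(stdGaussianPi p)
        = 6 * (β a * β b * β c)
          + 3 * Tmap (fun t => (∑ i, (β i) ^ 2) * β t) a b c := by
  intro a b c
  have hwick := integral_six_dotProduct_stdGaussianPi β β β (Pi.single a 1) (Pi.single b 1)
    (Pi.single c 1)
  simp only [integral_four_dotProduct_stdGaussianPi] at hwick
  simp only [dotProduct_single_one, Pi.single_apply] at hwick
  have hnorm : ∑ i, β i ^ 2 = β ⬝ᵥ β := by simp only [dotProduct, sq]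
  rw [Tmap_apply, hnorm]
  calc _ = _ := integral_congr_ae (ae_of_all _ fun x => by simp only [dotProduct]; ring)
    _ = _ := hwick
    _ = _ := by
      by_cases hab : a = b <;> by_cases hac : a = c <;> by_cases hbc : b = c <;>
        simp [hab, hac, hbc, Ne.symm] <;> ring
end

section
/- For any symmetric third-order tensor T ∈ ℝ^{p×p×p}, sup over unit vectors u, v, w ∈ S^{p−1} of |T(u, v, w)| is at most 9 ‖T‖_op, where ‖T‖_op := sup_{u ∈ S^{p−1}} |T(u, u, u)|. -/
open Finset

/-- Operator norm of a third-order tensor: `sup_{‖v‖₂ = 1} |T(v,v,v)|`. -/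
noncomputable def tensOpNorm {p : ℕ} (T : Fin p → Fin p → Fin p → ℝ) : ℝ :=
  sSup {r | ∃ v : Fin p → ℝ, (∑ i, (v i) ^ 2) = 1 ∧
    r = |∑ a, ∑ b, ∑ c, T a b c * v a * v b * v c|}

/-- The cubic form associated with a third-order tensor. -/
noncomputable def tensF {p : ℕ} (T : Fin p → Fin p → Fin p → ℝ) (x : Fin p → ℝ) : ℝ :=
  ∑ a, ∑ b, ∑ c, T a b c * x a * x b * x c

lemma sum3_swap12 {p : ℕ} (g : Fin p → Fin p → Fin p → ℝ) :
    ∑ a, ∑ b, ∑ c, g a b c = ∑ a, ∑ b, ∑ c, g b a c := Finset.sum_comm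

lemma sum3_swap23 {p : ℕ} (g : Fin p → Fin p → Fin p → ℝ) :
    ∑ a, ∑ b, ∑ c, g a b c = ∑ a, ∑ b, ∑ c, g a c b :=
  Finset.sum_congr rfl fun _ _ => Finset.sum_comm

lemma sum3_cycle1 {p : ℕ} (g : Fin p → Fin p → Fin p → ℝ) :
    ∑ a, ∑ b, ∑ c, g a b c = ∑ a, ∑ b, ∑ c, g c a b :=
  (sum3_swap12 g).trans (sum3_swap23 (fun a b c => g b a c))

lemma sum3_cycle2 {p : ℕ} (g : Fin p → Fin p → Fin p → ℝ) :
    ∑ a, ∑ b, ∑ c, g a b c = ∑ a, ∑ b, ∑ c, g b c a :=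
  (sum3_swap23 g).trans (sum3_swap12 (fun a b c => g a c b))

lemma sum3_swap13 {p : ℕ} (g : Fin p → Fin p → Fin p → ℝ) :
    ∑ a, ∑ b, ∑ c, g a b c = ∑ a, ∑ b, ∑ c, g c b a :=
  (sum3_cycle1 g).trans (sum3_swap12 (fun a b c => g c a b))

lemma tens_bddAbove {p : ℕ} (T : Fin p → Fin p → Fin p → ℝ) :
    BddAbove {r | ∃ v : Fin p → ℝ, (∑ i, (v i) ^ 2) = 1 ∧
      r = |∑ a, ∑ b, ∑ c, T a b c * v a * v b * v c|} := by
  refine ⟨∑ a, ∑ b, ∑ c, |T a b c|, fun r hr => ?_⟩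
  obtain ⟨v, hv1, rfl⟩ := hr
  have hvb : ∀ i, |v i| ≤ 1 := by
    intro i
    rw [← sq_le_one_iff_abs_le_one]
    calc v i ^ 2 ≤ ∑ j, (v j) ^ 2 :=
          Finset.single_le_sum (fun j _ => sq_nonneg (v j)) (mem_univ i)
      _ = 1 := hv1
  calc |∑ a, ∑ b, ∑ c, T a b c * v a * v b * v c|
      ≤ ∑ a, ∑ b, ∑ c, |T a b c * v a * v b * v c| := by
        refine (Finset.abs_sum_le_sum_abs _ _).trans ?_
        refine Finset.sum_le_sum fun a _ => ?_
        refine (Finset.abs_sum_le_sum_abs _ _).trans ?_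
        exact Finset.sum_le_sum fun b _ => Finset.abs_sum_le_sum_abs _ _
    _ ≤ ∑ a, ∑ b, ∑ c, |T a b c| := by
        refine Finset.sum_le_sum fun a _ => Finset.sum_le_sum fun b _ =>
          Finset.sum_le_sum fun c _ => ?_
        rw [abs_mul, abs_mul, abs_mul]
        have ha := hvb a; have hb := hvb b; have hc := hvb c
        have h0 := abs_nonneg (T a b c)
        have h' : |v a| * |v b| * |v c| ≤ 1 :=
          mul_le_one₀ (mul_le_one₀ ha (abs_nonneg _) hb) (abs_nonneg _) hc
        calc |T a b c| * |v a| * |v b| * |v c|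
            = |T a b c| * (|v a| * |v b| * |v c|) := by ring
          _ ≤ |T a b c| := mul_le_of_le_one_right h0 h'

lemma tensF_le_opNorm {p : ℕ} (T : Fin p → Fin p → Fin p → ℝ) (y : Fin p → ℝ)
    (hy : ∑ i, (y i) ^ 2 = 1) : |tensF T y| ≤ tensOpNorm T :=
  le_csSup (tens_bddAbove T) ⟨y, hy, rfl⟩

lemma tensF_smul {p : ℕ} (T : Fin p → Fin p → Fin p → ℝ) (t : ℝ) (y : Fin p → ℝ) :
    tensF T (fun i => t * y i) = t ^ 3 * tensF T y := by
  simp only [tensF, Finset.mul_sum]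
  exact Finset.sum_congr rfl fun a _ => Finset.sum_congr rfl fun b _ =>
    Finset.sum_congr rfl fun c _ => by ring

lemma tensF_bound27 {p : ℕ} (T : Fin p → Fin p → Fin p → ℝ) (hM : 0 ≤ tensOpNorm T)
    (x : Fin p → ℝ) (hx : ∑ i, (x i) ^ 2 ≤ 9) : |tensF T x| ≤ 27 * tensOpNorm T := by
  set s := ∑ i, (x i) ^ 2 with hs
  have hs0 : 0 ≤ s := Finset.sum_nonneg fun i _ => sq_nonneg _
  rcases eq_or_lt_of_le hs0 with h0 | hpos
  · have hx0 : ∀ i, x i = 0 := by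
      intro i
      have := (Finset.sum_eq_zero_iff_of_nonneg (fun j _ => sq_nonneg (x j))).mp h0.symm i (mem_univ i)
      exact pow_eq_zero_iff (by norm_num) |>.mp this
    have : tensF T x = 0 := by
      simp only [tensF]
      refine Finset.sum_eq_zero fun a _ => Finset.sum_eq_zero fun b _ =>
        Finset.sum_eq_zero fun c _ => ?_
      rw [hx0 a]; ring
    rw [this, abs_zero]; positivity
  · set t := Real.sqrt s with ht
    have htpos : 0 < t := Real.sqrt_pos.mpr hpos
    have ht2' : t ^ 2 = s := by rw [ht, Real.sq_sqrt hs0]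
    set y : Fin p → ℝ := fun i => x i / t with hy
    have hyu : ∑ i, (y i) ^ 2 = 1 := by
      simp only [hy, div_pow]
      rw [← Finset.sum_div, ← hs, ht2', div_self (ne_of_gt hpos)]
    have hxy : x = fun i => t * y i := by
      funext i; simp only [hy]; field_simp
    have hFx : tensF T x = t ^ 3 * tensF T y := by rw [hxy]; exact tensF_smul T t y
    have ht3 : t ≤ 3 := by
      rw [ht]
      calc Real.sqrt s ≤ Real.sqrt 9 := Real.sqrt_le_sqrt hx
        _ = 3 := by rw [show (9:ℝ) = 3^2 by norm_num, Real.sqrt_sq (by norm_num)]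
    have hFy := tensF_le_opNorm T y hyu
    rw [hFx, abs_mul, abs_pow, abs_of_pos htpos]
    calc t ^ 3 * |tensF T y| ≤ t ^ 3 * tensOpNorm T :=
          mul_le_mul_of_nonneg_left hFy (by positivity)
      _ ≤ 27 * tensOpNorm T := by
          have h3 : t ^ 3 ≤ 27 := by nlinarith
          exact mul_le_mul_of_nonneg_right h3 hM

/-- Polarization identity for symmetric trilinear forms. -/
lemma tens_polarization {p : ℕ} (T : Fin p → Fin p → Fin p → ℝ)
    (hsym : ∀ a b c, T a b c = T b a c ∧ T a b c = T a c b)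
    (u v w : Fin p → ℝ) :
    tensF T (fun i => u i + v i + w i) - tensF T (fun i => u i + v i - w i)
      - tensF T (fun i => u i - v i + w i) + tensF T (fun i => u i - v i - w i)
      = 24 * ∑ a, ∑ b, ∑ c, T a b c * u a * v b * w c := by
  have h1 : ∀ a b c, T a b c = T b a c := fun a b c => (hsym a b c).1
  have h2 : ∀ a b c, T a b c = T a c b := fun a b c => (hsym a b c).2
  set S := ∑ a, ∑ b, ∑ c, T a b c * u a * v b * w c with hS
  have S2 : ∑ a, ∑ b, ∑ c, T a b c * u a * w b * v c = S := by
    rw [sum3_swap23 (fun a b c => T a b c * u a * w b * v c)]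
    exact Finset.sum_congr rfl fun a _ => Finset.sum_congr rfl fun b _ =>
      Finset.sum_congr rfl fun c _ => by rw [← h2 a b c]; ring
  have S3 : ∑ a, ∑ b, ∑ c, T a b c * v a * u b * w c = S := by
    rw [sum3_swap12 (fun a b c => T a b c * v a * u b * w c)]
    exact Finset.sum_congr rfl fun a _ => Finset.sum_congr rfl fun b _ =>
      Finset.sum_congr rfl fun c _ => by rw [← h1 a b c]; ring
  have S4 : ∑ a, ∑ b, ∑ c, T a b c * v a * w b * u c = S := by
    rw [sum3_cycle2 (fun a b c => T a b c * v a * w b * u c)]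
    refine Finset.sum_congr rfl fun a _ => Finset.sum_congr rfl fun b _ =>
      Finset.sum_congr rfl fun c _ => ?_
    have : T b c a = T a b c := by rw [h2 b c a, h1 b a c]
    rw [this]; ring
  have S5 : ∑ a, ∑ b, ∑ c, T a b c * w a * u b * v c = S := by
    rw [sum3_cycle1 (fun a b c => T a b c * w a * u b * v c)]
    refine Finset.sum_congr rfl fun a _ => Finset.sum_congr rfl fun b _ =>
      Finset.sum_congr rfl fun c _ => ?_
    have : T c a b = T a b c := by rw [h1 c a b, h2 a c b]
    rw [this]; ring
  have S6 : ∑ a, ∑ b, ∑ c, T a b c * w a * v b * u c = S := by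
    rw [sum3_swap13 (fun a b c => T a b c * w a * v b * u c)]
    refine Finset.sum_congr rfl fun a _ => Finset.sum_congr rfl fun b _ =>
      Finset.sum_congr rfl fun c _ => ?_
    have : T c b a = T a b c := by rw [h1 c b a, h2 b c a, h1 b a c]
    rw [this]; ring
  have key : tensF T (fun i => u i + v i + w i) - tensF T (fun i => u i + v i - w i)
      - tensF T (fun i => u i - v i + w i) + tensF T (fun i => u i - v i - w i)
      = 4 * ((∑ a, ∑ b, ∑ c, T a b c * u a * v b * w c)
        + (∑ a, ∑ b, ∑ c, T a b c * u a * w b * v c)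
        + (∑ a, ∑ b, ∑ c, T a b c * v a * u b * w c)
        + (∑ a, ∑ b, ∑ c, T a b c * v a * w b * u c)
        + (∑ a, ∑ b, ∑ c, T a b c * w a * u b * v c)
        + (∑ a, ∑ b, ∑ c, T a b c * w a * v b * u c)) := by
    simp only [tensF, Finset.mul_sum, ← Finset.sum_add_distrib, ← Finset.sum_sub_distrib]
    exact Finset.sum_congr rfl fun a _ => Finset.sum_congr rfl fun b _ =>
      Finset.sum_congr rfl fun c _ => by ring
  rw [key, S2, S3, S4, S5, S6, ← hS]; ring

/-- For any symmetric third-order tensor `T ∈ ℝ^{p×p×p}` and unit vectors `u, v, w`,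
`|T(u,v,w)| ≤ 9 ‖T‖_op`. -/
theorem symmetric_tensor_sup_le (p : ℕ) (T : Fin p → Fin p → Fin p → ℝ)
    (hsym : ∀ a b c, T a b c = T b a c ∧ T a b c = T a c b)
    (u v w : Fin p → ℝ)
    (hu : ∑ i, (u i) ^ 2 = 1) (hv : ∑ i, (v i) ^ 2 = 1) (hw : ∑ i, (w i) ^ 2 = 1) :
    |∑ a, ∑ b, ∑ c, T a b c * u a * v b * w c| ≤ 9 * tensOpNorm T := by
  rcases Nat.eq_zero_or_pos p with hp | hp
  · subst hp
    simp at hu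
  haveI : NeZero p := ⟨hp.ne'⟩
  set M := tensOpNorm T with hMdef
  -- M is nonnegative
  have hM : 0 ≤ M := by
    have hy : ∑ i, ((fun j : Fin p => if j = 0 then (1 : ℝ) else 0) i) ^ 2 = 1 := by
      simp [apply_ite (fun x : ℝ => x ^ 2)]
    have h := tensF_le_opNorm T (fun j : Fin p => if j = 0 then (1 : ℝ) else 0) hy
    exact (abs_nonneg _).trans h
  -- Cauchy–Schwarz type cross bound
  have cross : ∀ x y : Fin p → ℝ, (∑ i, (x i) ^ 2 = 1) → (∑ i, (y i) ^ 2 = 1) →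
      |∑ i, x i * y i| ≤ 1 := by
    intro x y hx hy
    have e1 : ∑ i, (x i - y i) ^ 2
        = (∑ i, (x i) ^ 2) + (∑ i, (y i) ^ 2) - 2 * ∑ i, x i * y i := by
      simp only [Finset.mul_sum, ← Finset.sum_add_distrib, ← Finset.sum_sub_distrib]
      exact Finset.sum_congr rfl fun i _ => by ring
    have e2 : ∑ i, (x i + y i) ^ 2
        = (∑ i, (x i) ^ 2) + (∑ i, (y i) ^ 2) + 2 * ∑ i, x i * y i := by
      simp only [Finset.mul_sum, ← Finset.sum_add_distrib]
      exact Finset.sum_congr rfl fun i _ => by ring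
    have p1 : 0 ≤ ∑ i, (x i - y i) ^ 2 := Finset.sum_nonneg fun i _ => sq_nonneg _
    have p2 : 0 ≤ ∑ i, (x i + y i) ^ 2 := Finset.sum_nonneg fun i _ => sq_nonneg _
    rw [hx, hy] at e1 e2
    rw [abs_le]
    constructor <;> linarith
  have c1 := abs_le.mp (cross u v hu hv)
  have c2 := abs_le.mp (cross u w hu hw)
  have c3 := abs_le.mp (cross v w hv hw)
  -- squared norms of the four polarization vectors
  have sqnorm : ∀ e1 e2 : ℝ, |e1| = 1 → |e2| = 1 →
      ∑ i, (u i + e1 * v i + e2 * w i) ^ 2 ≤ 9 := by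
    intro e1 e2 he1 he2
    have exp : ∑ i, (u i + e1 * v i + e2 * w i) ^ 2
        = (∑ i, (u i) ^ 2) + e1 ^ 2 * (∑ i, (v i) ^ 2) + e2 ^ 2 * (∑ i, (w i) ^ 2)
          + 2 * e1 * (∑ i, u i * v i) + 2 * e2 * (∑ i, u i * w i)
          + 2 * (e1 * e2) * (∑ i, v i * w i) := by
      simp only [Finset.mul_sum, ← Finset.sum_add_distrib]
      exact Finset.sum_congr rfl fun i _ => by ring
    have he1' : e1 ^ 2 = 1 := by rw [← sq_abs, he1]; norm_num
    have he2' : e2 ^ 2 = 1 := by rw [← sq_abs, he2]; norm_num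
    have b1 : |e1 * (∑ i, u i * v i)| ≤ 1 := by
      rw [abs_mul, he1, one_mul]; exact cross u v hu hv
    have b2 : |e2 * (∑ i, u i * w i)| ≤ 1 := by
      rw [abs_mul, he2, one_mul]; exact cross u w hu hw
    have b3 : |(e1 * e2) * (∑ i, v i * w i)| ≤ 1 := by
      rw [abs_mul, abs_mul, he1, he2, one_mul, one_mul]; exact cross v w hv hw
    have b1' := abs_le.mp b1
    have b2' := abs_le.mp b2
    have b3' := abs_le.mp b3
    rw [exp, hu, hv, hw, he1', he2']
    nlinarith [b1'.1, b1'.2, b2'.1, b2'.2, b3'.1, b3'.2]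
  have n1 : ∑ i, (u i + v i + w i) ^ 2 ≤ 9 := by
    have h := sqnorm 1 1 (by norm_num) (by norm_num)
    calc ∑ i, (u i + v i + w i) ^ 2
        = ∑ i, (u i + 1 * v i + 1 * w i) ^ 2 :=
          Finset.sum_congr rfl fun i _ => by ring
      _ ≤ 9 := h
  have n2 : ∑ i, (u i + v i - w i) ^ 2 ≤ 9 := by
    have h := sqnorm 1 (-1) (by norm_num) (by norm_num)
    calc ∑ i, (u i + v i - w i) ^ 2
        = ∑ i, (u i + 1 * v i + (-1) * w i) ^ 2 :=
          Finset.sum_congr rfl fun i _ => by ring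
      _ ≤ 9 := h
  have n3 : ∑ i, (u i - v i + w i) ^ 2 ≤ 9 := by
    have h := sqnorm (-1) 1 (by norm_num) (by norm_num)
    calc ∑ i, (u i - v i + w i) ^ 2
        = ∑ i, (u i + (-1) * v i + 1 * w i) ^ 2 :=
          Finset.sum_congr rfl fun i _ => by ring
      _ ≤ 9 := h
  have n4 : ∑ i, (u i - v i - w i) ^ 2 ≤ 9 := by
    have h := sqnorm (-1) (-1) (by norm_num) (by norm_num)
    calc ∑ i, (u i - v i - w i) ^ 2
        = ∑ i, (u i + (-1) * v i + (-1) * w i) ^ 2 :=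
          Finset.sum_congr rfl fun i _ => by ring
      _ ≤ 9 := h
  have hA := tensF_bound27 T hM (fun i => u i + v i + w i) n1
  have hB := tensF_bound27 T hM (fun i => u i + v i - w i) n2
  have hC := tensF_bound27 T hM (fun i => u i - v i + w i) n3
  have hD := tensF_bound27 T hM (fun i => u i - v i - w i) n4
  have heq := tens_polarization T hsym u v w
  set A := tensF T (fun i => u i + v i + w i)
  set B := tensF T (fun i => u i + v i - w i)
  set C := tensF T (fun i => u i - v i + w i)
  set D := tensF T (fun i => u i - v i - w i)
  set S := ∑ a, ∑ b, ∑ c, T a b c * u a * v b * w c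
  have k3 : |A - B| ≤ |A| + |B| := by
    rw [sub_eq_add_neg]; exact (abs_add_le _ _).trans (by rw [abs_neg])
  have k2 : |A - B - C| ≤ |A - B| + |C| := by
    rw [sub_eq_add_neg (A - B) C]; exact (abs_add_le _ _).trans (by rw [abs_neg])
  have k1 : |A - B - C + D| ≤ |A - B - C| + |D| := abs_add_le _ _
  have h24 : |A - B - C + D| = 24 * |S| := by
    rw [heq, abs_mul, abs_of_pos (by norm_num : (0:ℝ) < 24)]
  have : 24 * |S| ≤ 108 * M := by
    rw [← h24]; linarith
  linarith
end
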